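/- The sum over all positive integers m of 1/|GL₂(ℤ/mℤ)| equals the Euler product over all primes ℓ of (1 + ℓ³/((ℓ−1)(ℓ²−1)(ℓ⁴−1))), and this product converges. -/

import Mathlib

/-!
By the Chinese remainder theorem `m ↦ 1 / |GL₂(ℤ/mℤ)|` is multiplicative, and it is at most
`1 / m²` because the matrices `!![1 + x y, x; y, 1]` are pairwise distinct elements of
`GL₂(ℤ/mℤ)`; so the Euler product for multiplicative functions applies. At a prime power
`ℓ^(e+1)`, invertibility of a matrix is detected modulo `ℓ`, and all fibres of the additive
reduction map to matrices over `𝔽_ℓ` have `ℓ^(4e)` elements, so `|GL₂(ℤ/ℓ^(e+1)ℤ)| =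
ℓ^(4e) |GL₂(𝔽_ℓ)|` and the local factor is `1 + ∑ₑ ℓ^(-4e) / ((ℓ² - 1)(ℓ² - ℓ))`.
-/

open Function

theorem AddMonoidHom.card_preimage_mul_card {α β : Type*} [AddGroup α] [AddGroup β]
    (f : α →+ β) (hf : Surjective f) (t : Set β) :
    Nat.card (f ⁻¹' t) * Nat.card β = Nat.card t * Nat.card α := by
  let e := QuotientAddGroup.quotientKerEquivOfSurjective f hf
  have hpre : f ⁻¹' t = QuotientAddGroup.mk ⁻¹' (e ⁻¹' t) := rfl
  have ht : Nat.card (e ⁻¹' t) = Nat.card t :=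
    Nat.card_preimage_of_injective e.injective (by simp)
  rw [hpre, Nat.card_congr (QuotientAddGroup.preimageMkEquivAddSubgroupProdSet _ _), Nat.card_prod,
    ht, ← f.ker.card_mul_index, AddSubgroup.index, Nat.card_congr e.toEquiv]
  ring

theorem ZMod.isUnit_castHom_prime_pow_iff {ℓ e : ℕ} (hℓ : ℓ.Prime) (he : e ≠ 0)
    (x : ZMod (ℓ ^ e)) : IsUnit (castHom (dvd_pow_self ℓ he) (ZMod ℓ) x) ↔ IsUnit x := by
  have : NeZero (ℓ ^ e) := ⟨pow_ne_zero e hℓ.ne_zero⟩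
  rw [← natCast_zmod_val x, map_natCast, isUnit_iff_coprime, isUnit_iff_coprime,
    Nat.coprime_pow_right_iff (Nat.pos_of_ne_zero he)]

theorem Nat.card_units_eq_card_setOf_isUnit (M : Type*) [Monoid M] :
    Nat.card Mˣ = Nat.card {x : M | IsUnit x} :=
  Nat.card_congr Submonoid.unitsTypeEquivIsUnitSubmonoid.toEquiv

namespace Matrix

variable {ι : Type*} [Fintype ι]

theorem card_square (R : Type*) :
    Nat.card (Matrix ι ι R) = Nat.card R ^ (Fintype.card ι ^ 2) := by
  simp [Matrix, Nat.card_fun, sq, pow_mul]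

variable [DecidableEq ι]

theorem card_GL_zmod_prime_pow_succ {ℓ : ℕ} (hℓ : ℓ.Prime) (e : ℕ) :
    Nat.card (GL ι (ZMod (ℓ ^ (e + 1)))) =
      ℓ ^ (Fintype.card ι ^ 2 * e) * Nat.card (GL ι (ZMod ℓ)) := by
  have : NeZero ℓ := ⟨hℓ.ne_zero⟩
  have hdvd := dvd_pow_self ℓ e.succ_ne_zero
  let f : Matrix ι ι (ZMod (ℓ ^ (e + 1))) →+ Matrix ι ι (ZMod ℓ) :=
    (ZMod.castHom hdvd (ZMod ℓ)).mapMatrix.toAddMonoidHom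
  have hf : Surjective f := by
    obtain ⟨g, hg⟩ := (ZMod.castHom_surjective hdvd).hasRightInverse
    exact fun B => ⟨B.map g, by ext; exact hg _⟩
  have hpre : {A : Matrix ι ι (ZMod (ℓ ^ (e + 1))) | IsUnit A} = f ⁻¹' {B | IsUnit B} := by
    ext A
    change IsUnit A ↔ IsUnit ((ZMod.castHom hdvd (ZMod ℓ)).mapMatrix A)
    rw [isUnit_iff_isUnit_det, isUnit_iff_isUnit_det, ← RingHom.map_det,
      ZMod.isUnit_castHom_prime_pow_iff hℓ e.succ_ne_zero]
  have key := f.card_preimage_mul_card hf {B | IsUnit B}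
  rw [← hpre, ← Nat.card_units_eq_card_setOf_isUnit, ← Nat.card_units_eq_card_setOf_isUnit,
    card_square, card_square, Nat.card_zmod, Nat.card_zmod, ← pow_mul, mul_comm (e + 1),
    mul_add_one, pow_add ℓ (Fintype.card ι ^ 2 * e), ← mul_assoc] at key
  exact Nat.eq_of_mul_eq_mul_right (pow_pos hℓ.pos _) (by rw [key, mul_comm (Nat.card _)])

theorem card_GL_fin_two_zmod_prime {ℓ : ℕ} (hℓ : ℓ.Prime) :
    (Nat.card (GL (Fin 2) (ZMod ℓ)) : ℝ) = ((ℓ : ℝ) ^ 2 - 1) * ((ℓ : ℝ) ^ 2 - ℓ) := by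
  have : Fact ℓ.Prime := ⟨hℓ⟩
  have h0 : ℓ ^ 0 ≤ ℓ ^ 2 := Nat.pow_le_pow_right hℓ.pos (by norm_num)
  have h1 : ℓ ^ 1 ≤ ℓ ^ 2 := Nat.pow_le_pow_right hℓ.pos (by norm_num)
  rw [card_GL_field, ZMod.card, Fin.prod_univ_two, Fin.val_zero, Fin.val_one, Nat.cast_mul,
    Nat.cast_sub h0, Nat.cast_sub h1]
  push_cast
  ring

variable (R S : Type*)

def prodRingEquiv [Semiring R] [Semiring S] :
    Matrix ι ι (R × S) ≃+* Matrix ι ι R × Matrix ι ι S :=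
  { (RingHom.fst R S).mapMatrix.prod (RingHom.snd R S).mapMatrix with
    invFun := fun P => of fun i j => (P.1 i j, P.2 i j)
    left_inv := fun _ => rfl
    right_inv := fun _ => rfl }

theorem card_GL_zmod_mul {m n : ℕ} (h : m.Coprime n) :
    Nat.card (GL ι (ZMod (m * n))) = Nat.card (GL ι (ZMod m)) * Nat.card (GL ι (ZMod n)) := by
  rw [← Nat.card_prod]
  exact Nat.card_congr ((Units.mapEquiv ((ZMod.chineseRemainder h).mapMatrix.trans
    (prodRingEquiv _ _)).toMulEquiv).trans MulEquiv.prodUnits).toEquiv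

/-- `(x, y) ↦ !![1, x; 0, 1] * !![1, 0; y, 1]`, a matrix of determinant `1`. -/
noncomputable def GeneralLinearGroup.transvectionPair [CommRing R] : R × R ↪ GL (Fin 2) R where
  toFun p := ((isUnit_iff_isUnit_det !![1 + p.1 * p.2, p.1; p.2, 1]).2
    (by simp [det_fin_two_of, mul_comm])).unit
  inj' p q hpq := by
    have h := congrArg Units.val hpq
    simp only [IsUnit.unit_spec] at h
    exact Prod.ext (congrFun (congrFun h 0) 1) (congrFun (congrFun h 1) 0)

theorem card_sq_le_card_GL_fin_two [CommRing R] [Finite R] :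
    Nat.card R ^ 2 ≤ Nat.card (GL (Fin 2) R) := by
  rw [sq, ← Nat.card_prod]
  exact Nat.card_le_card_of_injective _ (GeneralLinearGroup.transvectionPair R).injective

theorem infinite_GL_fin_two [CommRing R] [Infinite R] : Infinite (GL (Fin 2) R) :=
  Infinite.of_injective _ (GeneralLinearGroup.transvectionPair R).injective

end Matrix

noncomputable def invCardGL (m : ℕ) : ℝ := 1 / Nat.card (GL (Fin 2) (ZMod m))

-- `ZMod 0 = ℤ`, and `Nat.card` of the infinite group `GL₂(ℤ)` is `0`.
theorem invCardGL_zero : invCardGL 0 = 0 := by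
  have := Matrix.infinite_GL_fin_two (ZMod 0)
  simp [invCardGL]

theorem invCardGL_one : invCardGL 1 = 1 := by
  simp [invCardGL]

theorem invCardGL_mul {m n : ℕ} (h : m.Coprime n) :
    invCardGL (m * n) = invCardGL m * invCardGL n := by
  simp only [invCardGL, Matrix.card_GL_zmod_mul h, Nat.cast_mul, one_div, mul_inv]

theorem invCardGL_le (n : ℕ) : invCardGL n ≤ 1 / (n : ℝ) ^ 2 := by
  rcases n.eq_zero_or_pos with rfl | hn
  · simp [invCardGL_zero]
  have : NeZero n := ⟨hn.ne'⟩
  have := Matrix.card_sq_le_card_GL_fin_two (ZMod n)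
  rw [Nat.card_zmod] at this
  exact one_div_le_one_div_of_le (by positivity) (by exact_mod_cast this)

theorem summable_norm_invCardGL : Summable fun n => ‖invCardGL n‖ := by
  have hnonneg (n : ℕ) : 0 ≤ invCardGL n := by unfold invCardGL; positivity
  simp_rw [Real.norm_of_nonneg (hnonneg _)]
  exact .of_nonneg_of_le hnonneg invCardGL_le (Real.summable_one_div_nat_pow.2 one_lt_two)

theorem invCardGL_prime_pow_succ {ℓ : ℕ} (hℓ : ℓ.Prime) (e : ℕ) :
    invCardGL (ℓ ^ (e + 1)) =
      ((ℓ : ℝ) ^ 4)⁻¹ ^ e * (((ℓ : ℝ) ^ 2 - 1) * ((ℓ : ℝ) ^ 2 - ℓ))⁻¹ := by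
  rw [invCardGL, Matrix.card_GL_zmod_prime_pow_succ hℓ, Nat.cast_mul,
    Matrix.card_GL_fin_two_zmod_prime hℓ, Fintype.card_fin, one_div, mul_inv, inv_pow]
  push_cast
  ring

theorem tsum_invCardGL_prime_pow {ℓ : ℕ} (hℓ : ℓ.Prime) :
    ∑' e, invCardGL (ℓ ^ e) =
      1 + (ℓ : ℝ) ^ 3 / (((ℓ : ℝ) - 1) * ((ℓ : ℝ) ^ 2 - 1) * ((ℓ : ℝ) ^ 4 - 1)) := by
  have hsum : Summable fun e => invCardGL (ℓ ^ e) :=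
    summable_norm_invCardGL.of_norm.comp_injective (Nat.pow_right_injective hℓ.two_le)
  have hℓ1 : (1 : ℝ) < ℓ := by exact_mod_cast hℓ.one_lt
  have hℓ4 : ((ℓ : ℝ) ^ 4)⁻¹ < 1 := inv_lt_one_of_one_lt₀ (one_lt_pow₀ hℓ1 (by norm_num))
  rw [hsum.tsum_eq_zero_add, pow_zero, invCardGL_one]
  simp_rw [invCardGL_prime_pow_succ hℓ]
  rw [tsum_mul_right, tsum_geometric_of_lt_one (by positivity) hℓ4]
  have : (ℓ : ℝ) - 1 ≠ 0 := by linarith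
  have : (ℓ : ℝ) ^ 2 - 1 ≠ 0 := sub_ne_zero.2 (one_lt_pow₀ hℓ1 two_ne_zero).ne'
  have : (ℓ : ℝ) ^ 4 - 1 ≠ 0 := sub_ne_zero.2 (one_lt_pow₀ hℓ1 four_ne_zero).ne'
  have : (ℓ : ℝ) ^ 2 - ℓ ≠ 0 := by nlinarith
  field_simp

/-- The idealized constant `C_{τ(d₁)}`: the sum over all positive integers `m` of
`1/|GL₂(ℤ/mℤ)|` equals the Euler product over primes `ℓ` of
`1 + ℓ³/((ℓ−1)(ℓ²−1)(ℓ⁴−1))`, and this product converges. -/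
theorem stmt_3 :
    Multipliable (fun ℓ : Nat.Primes =>
      (1 + (ℓ : ℝ) ^ 3 / (((ℓ : ℝ) - 1) * ((ℓ : ℝ) ^ 2 - 1) * ((ℓ : ℝ) ^ 4 - 1)))) ∧
    ∑' m : ℕ+, (1 : ℝ) / (Nat.card (GL (Fin 2) (ZMod m)) : ℝ) =
      ∏' ℓ : Nat.Primes,
        (1 + (ℓ : ℝ) ^ 3 / (((ℓ : ℝ) - 1) * ((ℓ : ℝ) ^ 2 - 1) * ((ℓ : ℝ) ^ 4 - 1))) := by
  have euler := EulerProduct.eulerProduct_hasProd invCardGL_one (fun {_ _} h => invCardGL_mul h)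
    summable_norm_invCardGL invCardGL_zero
  rw [show (fun p : Nat.Primes => ∑' e, invCardGL ((p : ℕ) ^ e)) = _ from
    funext fun p => tsum_invCardGL_prime_pow p.2] at euler
  exact ⟨euler.multipliable,
    (tsum_pnat_eq_tsum_of_eq_zero invCardGL_zero).trans euler.tprod_eq.symm⟩
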